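/- Under the assumptions and constructions of the first equivalent form (condition Σ_r ≥ (m−1)‖r_k‖₁ + s for all k, extended marginals r̄_k^{(1)}, extended cost C̄^{(1)} with 0 = A_1 < A_2 < … < A_m), if X̄* is a minimizer of ⟨C̄^{(1)}, ·⟩ over Π(r̄_1^{(1)},…,r̄_m^{(1)}), then its restriction X* := X̄*_{[n]^m} to indices in [n]^m is an optimal solution of the multimarginal partial optimal transport problem min_{X ∈ Π^s(r_1,…,r_m)} ⟨C, X⟩. -/

import Mathlib

open Finset

noncomputable section

namespace MPOT

/-- The `k`-th marginal of a tensor indexed by `[n]^m` (functions `Fin m → Fin n`). -/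
def marg {m n : ℕ} (X : (Fin m → Fin n) → ℝ) (k : Fin m) (j : Fin n) : ℝ :=
  ∑ v : Fin m → Fin n, if v k = j then X v else 0

/-- Entrywise (Frobenius) inner product of tensors. -/
def dot {m n : ℕ} (C X : (Fin m → Fin n) → ℝ) : ℝ :=
  ∑ v : Fin m → Fin n, C v * X v

/-- The partial transport polytope `Π^s(r_1, …, r_m)`. -/
def PiPartial {m n : ℕ} (r : Fin m → Fin n → ℝ) (s : ℝ) :
    Set ((Fin m → Fin n) → ℝ) :=
  {X | (∀ v, 0 ≤ X v) ∧ (∀ k j, marg X k j ≤ r k j) ∧ ∑ v : Fin m → Fin n, X v = s}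

/-- The transport polytope `Π(a_1, …, a_m)` with equality marginal constraints. -/
def PiEq {m n : ℕ} (a : Fin m → Fin n → ℝ) : Set ((Fin m → Fin n) → ℝ) :=
  {X | (∀ v, 0 ≤ X v) ∧ ∀ k j, marg X k j = a k j}

/-- Embedding of `[n]^m` into `[n+1]^m`. -/
def emb {m n : ℕ} (v : Fin m → Fin n) : Fin m → Fin (n + 1) :=
  fun i => (v i).castSucc

/-- Restriction of a tensor on `[n+1]^m` to the indices in `[n]^m`. -/
def restr {m n : ℕ} (X : (Fin m → Fin (n + 1)) → ℝ) : (Fin m → Fin n) → ℝ :=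
  fun v => X (emb v)

/-- The number of coordinates of `u` equal to `n+1` (i.e. `Fin.last n`); `u ∈ T_S`
with `|S| = nLast u`. -/
def nLast {m n : ℕ} (u : Fin m → Fin (n + 1)) : ℕ :=
  (univ.filter fun ℓ => u ℓ = Fin.last n).card

/-- Extended cost tensor: the original cost on `T_∅ = [n]^m`, and value `A i` on the
`i`-th layer `∪_{|S| = i} T_S`. -/
def extCost {m n : ℕ} (C : (Fin m → Fin n) → ℝ) (A : ℕ → ℝ) :
    (Fin m → Fin (n + 1)) → ℝ :=
  fun u =>
    if h : ∀ i, u i ≠ Fin.last n then C fun i => (u i).castPred (h i)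
    else A (nLast u)

/-- Total mass of `X` on the sublayer `T_S`. -/
def layerSum {m n : ℕ} (X : (Fin m → Fin (n + 1)) → ℝ) (S : Finset (Fin m)) : ℝ :=
  ∑ u : Fin m → Fin (n + 1), if ∀ ℓ, (u ℓ = Fin.last n ↔ ℓ ∈ S) then X u else 0

/-- First-form extended marginals `r̄_k^{(1)} = [r_k, Σ_r/(m−1) − ‖r_k‖₁ − s/(m−1)]`. -/
def extMarg1 {m n : ℕ} (r : Fin m → Fin n → ℝ) (s : ℝ) : Fin m → Fin (n + 1) → ℝ :=
  fun k => Fin.snoc (r k)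
    ((∑ i, ∑ j, r i j) / ((m : ℝ) - 1) - (∑ j, r k j) - s / ((m : ℝ) - 1))

/-- Second-form extended marginals `r̄_k^{(2)} = [r_k, Σ_{i≠k} ‖r_i‖₁ − (m−1)s]`. -/
def extMarg2 {m n : ℕ} (r : Fin m → Fin n → ℝ) (s : ℝ) : Fin m → Fin (n + 1) → ℝ :=
  fun k => Fin.snoc (r k) ((∑ i ∈ univ.erase k, ∑ j, r i j) - ((m : ℝ) - 1) * s)

end MPOT

open MPOT

/-!
Two exchange arguments. First, a minimizer `X̄` puts no mass on cells with two or more dummy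
coordinates (index `n+1`): since `A 1 = 0 < A 2 < ⋯`, swapping one dummy coordinate of such a cell
with a cell of `[n]^m` strictly lowers the cost. Comparing the dummy marginals with the total
mass then shows that the mass left on `[n]^m` is exactly `s`, and on such plans the extended cost
is `⟨C, X̄_{[n]^m}⟩`. Second, every `X ∈ Π^s(r_1, …, r_m)` extends to a plan with the extended
marginals and the same cost: for each `k`, the dummy mass `r̄_k(n+1)` is placed on cells whose
only dummy coordinate is `k`, spread over the other coordinates as a product of the normalized
unused capacities `r_ℓ - c_ℓ(X)`.
-/

namespace MPOT

variable {m n : ℕ}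

section Marginals

variable {N : ℕ}

lemma marg_eq_sum_filter (X : (Fin m → Fin N) → ℝ) (k : Fin m) (j : Fin N) :
    marg X k j = ∑ v with v k = j, X v :=
  (Finset.sum_filter _ _).symm

lemma sum_marg (X : (Fin m → Fin N) → ℝ) (k : Fin m) : ∑ j, marg X k j = ∑ v, X v := by
  simp only [marg_eq_sum_filter]
  exact Finset.sum_fiberwise _ _ _

lemma marg_add (X Y : (Fin m → Fin N) → ℝ) (k : Fin m) (j : Fin N) :
    marg (X + Y) k j = marg X k j + marg Y k j := by
  simp only [marg_eq_sum_filter, Pi.add_apply, Finset.sum_add_distrib]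

lemma marg_sub (X Y : (Fin m → Fin N) → ℝ) (k : Fin m) (j : Fin N) :
    marg (X - Y) k j = marg X k j - marg Y k j := by
  simp only [marg_eq_sum_filter, Pi.sub_apply, Finset.sum_sub_distrib]

lemma marg_smul (c : ℝ) (X : (Fin m → Fin N) → ℝ) (k : Fin m) (j : Fin N) :
    marg (c • X) k j = c * marg X k j := by
  simp only [marg_eq_sum_filter, Pi.smul_apply, smul_eq_mul, Finset.mul_sum]

lemma marg_sum {ι : Type*} (t : Finset ι) (X : ι → (Fin m → Fin N) → ℝ) (k : Fin m)
    (j : Fin N) : marg (∑ i ∈ t, X i) k j = ∑ i ∈ t, marg (X i) k j := by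
  simp only [marg_eq_sum_filter, Finset.sum_apply]
  exact Finset.sum_comm

lemma marg_single (u : Fin m → Fin N) (c : ℝ) (k : Fin m) (j : Fin N) :
    marg (Pi.single u c) k j = if u k = j then c else 0 := by
  simp [marg_eq_sum_filter, Finset.sum_pi_single']

lemma marg_prod (f : Fin m → Fin N → ℝ) (k : Fin m) (j : Fin N) :
    marg (fun v => ∏ ℓ, f ℓ (v ℓ)) k j = f k j * ∏ ℓ ∈ univ.erase k, ∑ b, f ℓ b := by
  set f' := Function.update f k (Pi.single j (f k j)) with hf'
  have hf'_ne : ∀ ℓ ∈ univ.erase k, f' ℓ = f ℓ := fun ℓ hℓ => by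
    rw [hf', Function.update_of_ne (Finset.ne_of_mem_erase hℓ)]
  have hf'_k : f' k = Pi.single j (f k j) := by rw [hf', Function.update_self]
  calc marg (fun v => ∏ ℓ, f ℓ (v ℓ)) k j = ∑ v : Fin m → Fin N, ∏ ℓ, f' ℓ (v ℓ) := by
        refine Finset.sum_congr rfl fun v _ => ?_
        have hrest : ∏ ℓ ∈ univ.erase k, f' ℓ (v ℓ) = ∏ ℓ ∈ univ.erase k, f ℓ (v ℓ) :=
          Finset.prod_congr rfl fun ℓ hℓ => by rw [hf'_ne ℓ hℓ]
        simp only [← Finset.mul_prod_erase univ _ (mem_univ k)]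
        rw [hrest, hf'_k]
        by_cases hv : v k = j <;> simp [hv]
    _ = ∏ ℓ, ∑ b, f' ℓ b := (Fintype.prod_sum _).symm
    _ = f k j * ∏ ℓ ∈ univ.erase k, ∑ b, f ℓ b := by
        rw [← Finset.mul_prod_erase _ _ (mem_univ k), hf'_k,
          Finset.prod_congr rfl fun ℓ hℓ => by rw [hf'_ne ℓ hℓ]]
        simp [Finset.sum_pi_single']

end Marginals

section Layers

lemma emb_injective : Function.Injective (emb : (Fin m → Fin n) → Fin m → Fin (n + 1)) :=
  fun _ _ h => funext fun i => Fin.castSucc_injective _ (congrFun h i)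

lemma nLast_eq_zero_iff {u : Fin m → Fin (n + 1)} : nLast u = 0 ↔ ∀ i, u i ≠ Fin.last n := by
  simp [nLast, Finset.filter_eq_empty_iff]

lemma nLast_emb (v : Fin m → Fin n) : nLast (emb v) = 0 :=
  nLast_eq_zero_iff.2 fun i => (Fin.castSucc_lt_last (v i)).ne

lemma exists_emb_eq_of_nLast_eq_zero {u : Fin m → Fin (n + 1)} (h : nLast u = 0) :
    ∃ v, emb v = u :=
  ⟨fun i => (u i).castPred (nLast_eq_zero_iff.1 h i),
    funext fun _ => Fin.castSucc_castPred _ _⟩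

lemma exists_eq_last_of_nLast_ne_zero {u : Fin m → Fin (n + 1)} (h : nLast u ≠ 0) :
    ∃ i, u i = Fin.last n := by
  simpa [nLast_eq_zero_iff] using h

lemma sum_nLast_mul_eq_sum_filter (Y : (Fin m → Fin (n + 1)) → ℝ) :
    ∑ u, (nLast u : ℝ) * Y u = ∑ u with nLast u ≠ 0, (nLast u : ℝ) * Y u :=
  (Finset.sum_filter_of_ne (p := fun u => nLast u ≠ 0) fun u _ h h0 => h (by
    rw [h0, Nat.cast_zero, zero_mul])).symm

lemma nLast_le (u : Fin m → Fin (n + 1)) : nLast u ≤ m :=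
  (Finset.card_filter_le _ _).trans_eq (Finset.card_fin m)

lemma nLast_update_last {u : Fin m → Fin (n + 1)} {k : Fin m} (h : u k ≠ Fin.last n) :
    nLast (Function.update u k (Fin.last n)) = nLast u + 1 := by
  have hfilter : (univ.filter fun ℓ => Function.update u k (Fin.last n) ℓ = Fin.last n) =
      insert k (univ.filter fun ℓ => u ℓ = Fin.last n) := by
    ext ℓ
    by_cases hℓ : ℓ = k <;> simp [hℓ]
  rw [nLast, hfilter, Finset.card_insert_of_notMem (by simp [h])]
  rfl

lemma sum_eq_sum_emb_add (f : (Fin m → Fin (n + 1)) → ℝ) :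
    ∑ u, f u = ∑ v, f (emb v) + ∑ u with nLast u ≠ 0, f u := by
  rw [← Finset.sum_filter_add_sum_filter_not univ (fun u => nLast u = 0)]
  congr 1
  refine (Finset.sum_nbij emb (by simp [nLast_emb]) emb_injective.injOn (fun u hu => ?_)
    fun _ _ => rfl).symm
  obtain ⟨v, rfl⟩ := exists_emb_eq_of_nLast_eq_zero (Finset.mem_filter.1 hu).2
  exact ⟨v, mem_univ _, rfl⟩

lemma sum_sub_sum_restr (Y : (Fin m → Fin (n + 1)) → ℝ) :
    ∑ u, Y u - ∑ v, restr Y v = ∑ u with nLast u ≠ 0, Y u := by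
  rw [sum_eq_sum_emb_add Y]
  unfold restr
  ring

lemma marg_restr_le {Y : (Fin m → Fin (n + 1)) → ℝ} (hY : ∀ u, 0 ≤ Y u) (k : Fin m)
    (j : Fin n) : marg (restr Y) k j ≤ marg Y k j.castSucc := by
  rw [marg, marg, sum_eq_sum_emb_add]
  refine le_add_of_le_of_nonneg (le_of_eq (Finset.sum_congr rfl fun v _ => ?_))
    (Finset.sum_nonneg fun u _ => by split_ifs <;> simp [hY u])
  simp [restr, emb, Fin.castSucc_inj]

lemma sum_nLast_mul (Y : (Fin m → Fin (n + 1)) → ℝ) :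
    ∑ u, (nLast u : ℝ) * Y u = ∑ k, marg Y k (Fin.last n) := by
  simp only [marg, nLast, Finset.card_filter, Nat.cast_sum, Finset.sum_mul]
  rw [Finset.sum_comm]
  refine Finset.sum_congr rfl fun k _ => Finset.sum_congr rfl fun u _ => ?_
  split_ifs <;> simp

lemma sum_filter_lt_sum_nLast_mul {Y : (Fin m → Fin (n + 1)) → ℝ} (hY : ∀ u, 0 ≤ Y u)
    {u₀ : Fin m → Fin (n + 1)} (hu₀ : 2 ≤ nLast u₀) (hpos : 0 < Y u₀) :
    ∑ u with nLast u ≠ 0, Y u < ∑ u, (nLast u : ℝ) * Y u := by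
  rw [sum_nLast_mul_eq_sum_filter]
  refine Finset.sum_lt_sum (fun u hu => ?_) ⟨u₀, Finset.mem_filter.2 ⟨mem_univ _, by omega⟩, ?_⟩
  · have : (1 : ℝ) ≤ nLast u := by
      exact_mod_cast Nat.one_le_iff_ne_zero.2 (Finset.mem_filter.1 hu).2
    nlinarith [hY u]
  · have : (2 : ℝ) ≤ nLast u₀ := by exact_mod_cast hu₀
    nlinarith

lemma sum_filter_eq_sum_nLast_mul {Y : (Fin m → Fin (n + 1)) → ℝ}
    (hY : ∀ u, 2 ≤ nLast u → Y u = 0) :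
    ∑ u with nLast u ≠ 0, Y u = ∑ u, (nLast u : ℝ) * Y u := by
  rw [sum_nLast_mul_eq_sum_filter]
  refine Finset.sum_congr rfl fun u hu => ?_
  rcases Nat.lt_or_ge (nLast u) 2 with h | h
  · rw [show nLast u = 1 by have := (Finset.mem_filter.1 hu).2; omega]
    simp
  · simp [hY u h]

end Layers

section Cost

lemma extCost_emb (C : (Fin m → Fin n) → ℝ) (A : ℕ → ℝ) (v : Fin m → Fin n) :
    extCost C A (emb v) = C v := by
  rw [extCost, dif_pos (nLast_eq_zero_iff.1 (nLast_emb v))]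
  rfl

lemma extCost_of_nLast_ne_zero (C : (Fin m → Fin n) → ℝ) (A : ℕ → ℝ)
    {u : Fin m → Fin (n + 1)} (h : nLast u ≠ 0) : extCost C A u = A (nLast u) := by
  rw [extCost, dif_neg (mt nLast_eq_zero_iff.2 h)]

lemma dot_extCost (C : (Fin m → Fin n) → ℝ) (A : ℕ → ℝ) (Y : (Fin m → Fin (n + 1)) → ℝ) :
    dot (extCost C A) Y = dot C (restr Y) + ∑ u with nLast u ≠ 0, A (nLast u) * Y u := by
  rw [dot, sum_eq_sum_emb_add]
  congr 1
  · simp only [extCost_emb]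
    rfl
  · exact Finset.sum_congr rfl fun u hu => by
      rw [extCost_of_nLast_ne_zero C A (Finset.mem_filter.1 hu).2]

lemma dot_extCost_of_nLast_le_one (C : (Fin m → Fin n) → ℝ) {A : ℕ → ℝ} (hA1 : A 1 = 0)
    {Y : (Fin m → Fin (n + 1)) → ℝ} (hY : ∀ u, 2 ≤ nLast u → Y u = 0) :
    dot (extCost C A) Y = dot C (restr Y) := by
  rw [dot_extCost, add_eq_left]
  refine Finset.sum_eq_zero fun u hu => ?_
  rcases Nat.lt_or_ge (nLast u) 2 with h | h
  · rw [show nLast u = 1 by have := (Finset.mem_filter.1 hu).2; omega, hA1, zero_mul]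
  · rw [hY u h, mul_zero]

end Cost

section ExtMarg

variable (r : Fin m → Fin n → ℝ) (s : ℝ)

lemma sum_extMarg1 (k : Fin m) :
    ∑ b, extMarg1 r s k b = ((∑ i, ∑ j, r i j) - s) / ((m : ℝ) - 1) := by
  simp only [Fin.sum_univ_castSucc, extMarg1, Fin.snoc_castSucc, Fin.snoc_last]
  ring

lemma sum_extMarg1_last (hm : 2 ≤ m) :
    ∑ k, extMarg1 r s k (Fin.last n) = ((∑ i, ∑ j, r i j) - s) / ((m : ℝ) - 1) - s := by
  have hm1 : (m : ℝ) - 1 ≠ 0 := by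
    have : (2 : ℝ) ≤ m := by exact_mod_cast hm
    linarith
  simp only [extMarg1, Fin.snoc_last, Finset.sum_sub_distrib, Finset.sum_const,
    Finset.card_univ, Fintype.card_fin, nsmul_eq_mul]
  field_simp
  ring

lemma sum_erase_extMarg1_last (hm : 2 ≤ m) (ℓ : Fin m) :
    ∑ k ∈ univ.erase ℓ, extMarg1 r s k (Fin.last n) = ∑ j, r ℓ j - s := by
  rw [Finset.sum_erase_eq_sub (mem_univ ℓ), sum_extMarg1_last r s hm]
  simp only [extMarg1, Fin.snoc_last]
  ring

variable {r s}

lemma extMarg1_last_nonneg (hm : 2 ≤ m)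
    (hcond : ∀ k, ((m : ℝ) - 1) * (∑ j, r k j) + s ≤ ∑ i, ∑ j, r i j) (k : Fin m) :
    0 ≤ extMarg1 r s k (Fin.last n) := by
  have hm1 : (0 : ℝ) < m - 1 := by
    have : (2 : ℝ) ≤ m := by exact_mod_cast hm
    linarith
  have : ∑ j, r k j ≤ ((∑ i, ∑ j, r i j) - s) / ((m : ℝ) - 1) := by
    rw [le_div_iff₀ hm1]
    linarith [hcond k]
  simp only [extMarg1, Fin.snoc_last]
  rw [sub_div] at this
  linarith

lemma sum_nLast_mul_of_mem_PiEq (hm : 2 ≤ m) {Y : (Fin m → Fin (n + 1)) → ℝ}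
    (hY : Y ∈ PiEq (extMarg1 r s)) :
    ∑ u, (nLast u : ℝ) * Y u = ∑ u, Y u - s := by
  have htotal : ∑ u, Y u = ((∑ i, ∑ j, r i j) - s) / ((m : ℝ) - 1) := by
    rw [← sum_marg Y ⟨0, by omega⟩, ← sum_extMarg1 r s ⟨0, by omega⟩]
    exact Finset.sum_congr rfl fun b _ => hY.2 _ b
  rw [sum_nLast_mul, Finset.sum_congr rfl fun k _ => hY.2 k _, sum_extMarg1_last r s hm,
    htotal]

end ExtMarg

section Swap

variable {N : ℕ}

def swapDir (u w : Fin m → Fin N) (k : Fin m) : (Fin m → Fin N) → ℝ :=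
  Pi.single (Function.update u k (w k)) 1 + Pi.single (Function.update w k (u k)) 1 -
    Pi.single u 1 - Pi.single w 1

lemma marg_swapDir (u w : Fin m → Fin N) (k k' : Fin m) (j : Fin N) :
    marg (swapDir u w k) k' j = 0 := by
  simp only [swapDir, marg_sub, marg_add, marg_single]
  rcases eq_or_ne k' k with rfl | hk'
  · simp only [Function.update_self]
    ring
  · simp only [Function.update_of_ne hk']
    ring

lemma dot_add_smul_swapDir (c X : (Fin m → Fin N) → ℝ) (ε : ℝ) (u w : Fin m → Fin N)
    (k : Fin m) :
    dot c (X + ε • swapDir u w k) = dot c X + ε * (c (Function.update u k (w k)) +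
      c (Function.update w k (u k)) - c u - c w) := by
  simp only [dot, swapDir, Pi.add_apply, Pi.smul_apply, Pi.sub_apply, smul_eq_mul, mul_add,
    Finset.sum_add_distrib, mul_sub, Finset.sum_sub_distrib, Pi.single_apply, mul_ite, mul_one,
    mul_zero, Finset.sum_ite_eq']
  simp only [mem_univ, if_true]
  ring

lemma add_smul_swapDir_mem_PiEq {a : Fin m → Fin N → ℝ} {X : (Fin m → Fin N) → ℝ}
    (hX : X ∈ PiEq a) {u w : Fin m → Fin N} (huw : u ≠ w) {ε : ℝ} (hε : 0 ≤ ε)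
    (hεu : ε ≤ X u) (hεw : ε ≤ X w) (k : Fin m) : X + ε • swapDir u w k ∈ PiEq a := by
  refine ⟨fun v => ?_, fun k' j => ?_⟩
  · have hgain : 0 ≤ (Pi.single (Function.update u k (w k)) 1 : (Fin m → Fin N) → ℝ) v +
        (Pi.single (Function.update w k (u k)) 1 : (Fin m → Fin N) → ℝ) v := by
      simp only [Pi.single_apply]
      positivity
    simp only [swapDir, Pi.add_apply, Pi.smul_apply, Pi.sub_apply, smul_eq_mul]
    rcases eq_or_ne v u with rfl | hvu
    · rw [Pi.single_eq_same, Pi.single_eq_of_ne huw]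
      nlinarith
    rcases eq_or_ne v w with rfl | hvw
    · rw [Pi.single_eq_same, Pi.single_eq_of_ne hvu]
      nlinarith
    · rw [Pi.single_eq_of_ne hvu, Pi.single_eq_of_ne hvw]
      nlinarith [hX.1 v]
  · rw [marg_add, marg_smul, marg_swapDir, mul_zero, add_zero]
    exact hX.2 k' j

lemma swap_cost_nonneg {a : Fin m → Fin N → ℝ} {c X : (Fin m → Fin N) → ℝ}
    (hX : X ∈ PiEq a) (hopt : ∀ Y ∈ PiEq a, dot c X ≤ dot c Y) {u w : Fin m → Fin N}
    (huw : u ≠ w) (hu : 0 < X u) (hw : 0 < X w) (k : Fin m) :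
    0 ≤ c (Function.update u k (w k)) + c (Function.update w k (u k)) - c u - c w := by
  have hε : 0 < min (X u) (X w) := lt_min hu hw
  have := hopt _ (add_smul_swapDir_mem_PiEq hX huw hε.le (min_le_left _ _)
    (min_le_right _ _) k)
  rw [dot_add_smul_swapDir] at this
  nlinarith

end Swap

section Minimizer

variable {C : (Fin m → Fin n) → ℝ} {r : Fin m → Fin n → ℝ} {s : ℝ} {A : ℕ → ℝ}
  {Xb : (Fin m → Fin (n + 1)) → ℝ}

lemma exists_emb_pos_of_two_le_nLast (hm : 2 ≤ m) (hs0 : 0 ≤ s)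
    (hmem : Xb ∈ PiEq (extMarg1 r s)) {u₀ : Fin m → Fin (n + 1)} (hu₀ : 2 ≤ nLast u₀)
    (hpos : 0 < Xb u₀) : ∃ v, 0 < Xb (emb v) := by
  have hlt := sum_filter_lt_sum_nLast_mul hmem.1 hu₀ hpos
  rw [← sum_sub_sum_restr, sum_nLast_mul_of_mem_PiEq hm hmem] at hlt
  obtain ⟨v, -, hv⟩ := Finset.exists_lt_of_sum_lt (f := 0) (g := restr Xb)
    (by rw [Pi.zero_def, Finset.sum_const_zero]; linarith)
  exact ⟨v, hv⟩

lemma eq_zero_of_two_le_nLast (hm : 2 ≤ m) (hC : ∀ v, 0 ≤ C v) (hs0 : 0 ≤ s)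
    (hA1 : A 1 = 0) (hA : ∀ i, 1 ≤ i → i < m → A i < A (i + 1))
    (hmem : Xb ∈ PiEq (extMarg1 r s))
    (hopt : ∀ Y ∈ PiEq (extMarg1 r s), dot (extCost C A) Xb ≤ dot (extCost C A) Y)
    {u₀ : Fin m → Fin (n + 1)} (hu₀ : 2 ≤ nLast u₀) : Xb u₀ = 0 := by
  by_contra hne
  have hpos : 0 < Xb u₀ := (hmem.1 u₀).lt_of_ne' hne
  obtain ⟨v, hv⟩ := exists_emb_pos_of_two_le_nLast hm hs0 hmem hu₀ hpos
  obtain ⟨k, hk⟩ := exists_eq_last_of_nLast_ne_zero (show nLast u₀ ≠ 0 by omega)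
  have hvk : emb v k ≠ Fin.last n := nLast_eq_zero_iff.1 (nLast_emb v) k
  have huv : u₀ ≠ emb v := fun h => by rw [h, nLast_emb] at hu₀; omega
  set u₁ := Function.update u₀ k (emb v k)
  have hnu₀ : nLast u₀ = nLast u₁ + 1 := by
    rw [← nLast_update_last (k := k) (by simpa [u₁] using hvk)]
    simp [u₁, ← hk]
  have hnw₁ : nLast (Function.update (emb v) k (u₀ k)) = 1 := by
    rw [hk, nLast_update_last hvk, nLast_emb]
  have hswap := swap_cost_nonneg hmem hopt huv hpos hv k
  rw [extCost_of_nLast_ne_zero C A (show nLast u₁ ≠ 0 by omega),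
    extCost_of_nLast_ne_zero C A (show nLast (Function.update (emb v) k (u₀ k)) ≠ 0 by omega),
    hnw₁, hA1, extCost_of_nLast_ne_zero C A (show nLast u₀ ≠ 0 by omega), extCost_emb,
    hnu₀] at hswap
  have := hA (nLast u₁) (by omega) (by have := nLast_le u₀; omega)
  linarith [hC v]

lemma restr_mem_PiPartial (hm : 2 ≤ m) (hmem : Xb ∈ PiEq (extMarg1 r s))
    (hlow : ∀ u, 2 ≤ nLast u → Xb u = 0) : restr Xb ∈ PiPartial r s := by
  refine ⟨fun v => hmem.1 _, fun k j => ?_, ?_⟩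
  · calc marg (restr Xb) k j ≤ marg Xb k j.castSucc := marg_restr_le hmem.1 k j
      _ = r k j := by rw [hmem.2]; simp [extMarg1]
  · have := sum_sub_sum_restr Xb
    rw [sum_filter_eq_sum_nLast_mul hlow, sum_nLast_mul_of_mem_PiEq hm hmem] at this
    linarith

end Minimizer

section Extension

lemma extend_emb_of_nLast_ne_zero (X : (Fin m → Fin n) → ℝ) {u : Fin m → Fin (n + 1)}
    (h : nLast u ≠ 0) : Function.extend emb X 0 u = 0 :=
  Function.extend_apply' _ _ _ fun ⟨v, hv⟩ => h (hv ▸ nLast_emb v)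

lemma extend_emb_nonneg {X : (Fin m → Fin n) → ℝ} (hX : ∀ v, 0 ≤ X v)
    (u : Fin m → Fin (n + 1)) : 0 ≤ Function.extend emb X 0 u := by
  by_cases h : nLast u = 0
  · obtain ⟨v, rfl⟩ := exists_emb_eq_of_nLast_eq_zero h
    rw [emb_injective.extend_apply]
    exact hX v
  · rw [extend_emb_of_nLast_ne_zero X h]

lemma marg_extend_emb (X : (Fin m → Fin n) → ℝ) (k : Fin m) (b : Fin (n + 1)) :
    marg (Function.extend emb X 0) k b = ∑ v, if (v k).castSucc = b then X v else 0 := by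
  have hrest : ∑ u with nLast u ≠ 0, (if u k = b then Function.extend emb X 0 u else 0) = 0 :=
    Finset.sum_eq_zero fun u hu => by
      rw [extend_emb_of_nLast_ne_zero X (Finset.mem_filter.1 hu).2, ite_self]
  rw [marg, sum_eq_sum_emb_add, hrest, add_zero]
  simp only [emb_injective.extend_apply]
  rfl

lemma marg_extend_emb_castSucc (X : (Fin m → Fin n) → ℝ) (k : Fin m) (j : Fin n) :
    marg (Function.extend emb X 0) k j.castSucc = marg X k j := by
  simp only [marg_extend_emb, Fin.castSucc_inj]
  rfl

lemma marg_extend_emb_last (X : (Fin m → Fin n) → ℝ) (k : Fin m) :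
    marg (Function.extend emb X 0) k (Fin.last n) = 0 := by
  simp [marg_extend_emb, (Fin.castSucc_lt_last _).ne]

variable (r : Fin m → Fin n → ℝ) (s : ℝ) (X : (Fin m → Fin n) → ℝ)

def excessDist (ℓ : Fin m) : Fin (n + 1) → ℝ :=
  Fin.snoc (fun j => (r ℓ j - marg X ℓ j) / (∑ j, r ℓ j - s)) 0

def slackPart (k : Fin m) : (Fin m → Fin (n + 1)) → ℝ :=
  fun u => ∏ ℓ, Function.update (excessDist r s X) k
    (Pi.single (Fin.last n) (extMarg1 r s k (Fin.last n))) ℓ (u ℓ)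

def extendPlan : (Fin m → Fin (n + 1)) → ℝ :=
  Function.extend emb X 0 + ∑ k, slackPart r s X k

variable {r s X}

lemma excessDist_last (ℓ : Fin m) : excessDist r s X ℓ (Fin.last n) = 0 := by
  simp [excessDist]

lemma sum_excess (hX : X ∈ PiPartial r s) (ℓ : Fin m) :
    ∑ j, (r ℓ j - marg X ℓ j) = ∑ j, r ℓ j - s := by
  rw [Finset.sum_sub_distrib, sum_marg, hX.2.2]

lemma excess_nonneg (hX : X ∈ PiPartial r s) (ℓ : Fin m) (j : Fin n) :
    0 ≤ r ℓ j - marg X ℓ j :=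
  sub_nonneg.2 (hX.2.1 ℓ j)

lemma excessDist_nonneg (hX : X ∈ PiPartial r s) (ℓ : Fin m) (b : Fin (n + 1)) :
    0 ≤ excessDist r s X ℓ b := by
  induction b using Fin.lastCases with
  | last => rw [excessDist_last]
  | cast j =>
    simp only [excessDist, Fin.snoc_castSucc]
    exact div_nonneg (excess_nonneg hX ℓ j)
      (sum_excess hX ℓ ▸ Finset.sum_nonneg fun j _ => excess_nonneg hX ℓ j)

lemma excessDist_castSucc_mul (hX : X ∈ PiPartial r s) (ℓ : Fin m) (j : Fin n) :
    excessDist r s X ℓ j.castSucc * (∑ j, r ℓ j - s) = r ℓ j - marg X ℓ j := by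
  simp only [excessDist, Fin.snoc_castSucc]
  by_cases hE : ∑ j, r ℓ j - s = 0
  · rw [← sum_excess hX ℓ] at hE
    rw [(Finset.sum_eq_zero_iff_of_nonneg fun j _ => excess_nonneg hX ℓ j).1 hE j (mem_univ j),
      zero_div, zero_mul]
  · exact div_mul_cancel₀ _ hE

lemma sum_excessDist (hX : X ∈ PiPartial r s) {ℓ : Fin m} (hE : ∑ j, r ℓ j - s ≠ 0) :
    ∑ b, excessDist r s X ℓ b = 1 := by
  simp only [Fin.sum_univ_castSucc, excessDist, Fin.snoc_castSucc, Fin.snoc_last, add_zero,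
    ← Finset.sum_div, sum_excess hX]
  exact div_self hE

/-- `excessDist r s X ℓ` fails to be a probability vector only when `‖r_ℓ‖₁ = s`, and then the
dummy masses of all other coordinates vanish, since they are nonnegative and sum to
`‖r_ℓ‖₁ - s`. -/
lemma extMarg1_last_mul_prod_sum_excessDist (hm : 2 ≤ m)
    (hcond : ∀ k, ((m : ℝ) - 1) * (∑ j, r k j) + s ≤ ∑ i, ∑ j, r i j)
    (hX : X ∈ PiPartial r s) {k : Fin m} {t : Finset (Fin m)} (hk : k ∉ t) :
    extMarg1 r s k (Fin.last n) * ∏ ℓ ∈ t, ∑ b, excessDist r s X ℓ b =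
      extMarg1 r s k (Fin.last n) := by
  by_cases h : ∀ ℓ ∈ t, ∑ j, r ℓ j - s ≠ 0
  · rw [Finset.prod_congr rfl fun ℓ hℓ => sum_excessDist hX (h ℓ hℓ), Finset.prod_const_one,
      mul_one]
  push Not at h
  obtain ⟨ℓ, hℓt, hE⟩ := h
  have hzero : extMarg1 r s k (Fin.last n) = 0 := by
    rw [← sum_erase_extMarg1_last r s hm ℓ] at hE
    exact (Finset.sum_eq_zero_iff_of_nonneg fun k _ => extMarg1_last_nonneg hm hcond k).1 hE k
      (Finset.mem_erase.2 ⟨fun h => hk (h ▸ hℓt), mem_univ k⟩)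
  rw [hzero, zero_mul]

lemma slackPart_eq_zero_of_ne_last {k : Fin m} {u : Fin m → Fin (n + 1)}
    (hu : u k ≠ Fin.last n) : slackPart r s X k u = 0 :=
  Finset.prod_eq_zero (mem_univ k) (by simp [Pi.single_eq_of_ne hu])

lemma slackPart_eq_zero_of_two_le_nLast (k : Fin m) {u : Fin m → Fin (n + 1)}
    (hu : 2 ≤ nLast u) : slackPart r s X k u = 0 := by
  obtain ⟨ℓ, hℓ, hℓk⟩ := Finset.exists_mem_ne (show 1 < nLast u by omega) k
  refine Finset.prod_eq_zero (mem_univ ℓ) ?_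
  rw [Function.update_of_ne hℓk, (Finset.mem_filter.1 hℓ).2, excessDist_last]

lemma slackPart_nonneg (hm : 2 ≤ m)
    (hcond : ∀ k, ((m : ℝ) - 1) * (∑ j, r k j) + s ≤ ∑ i, ∑ j, r i j)
    (hX : X ∈ PiPartial r s) (k : Fin m) (u : Fin m → Fin (n + 1)) :
    0 ≤ slackPart r s X k u := by
  refine Finset.prod_nonneg fun ℓ _ => ?_
  rcases eq_or_ne ℓ k with rfl | hℓk
  · rw [Function.update_self, Pi.single_apply]
    split_ifs
    exacts [extMarg1_last_nonneg hm hcond ℓ, le_rfl]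
  · rw [Function.update_of_ne hℓk]
    exact excessDist_nonneg hX ℓ _

lemma marg_slackPart_self (hm : 2 ≤ m)
    (hcond : ∀ k, ((m : ℝ) - 1) * (∑ j, r k j) + s ≤ ∑ i, ∑ j, r i j)
    (hX : X ∈ PiPartial r s) (k : Fin m) (b : Fin (n + 1)) :
    marg (slackPart r s X k) k b =
      (Pi.single (Fin.last n) (extMarg1 r s k (Fin.last n)) : Fin (n + 1) → ℝ) b := by
  unfold slackPart
  rw [marg_prod, Function.update_self, Finset.prod_congr rfl fun ℓ hℓ => by
    rw [Function.update_of_ne (Finset.ne_of_mem_erase hℓ)]]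
  rcases eq_or_ne b (Fin.last n) with rfl | hb
  · rw [Pi.single_eq_same,
      extMarg1_last_mul_prod_sum_excessDist hm hcond hX (Finset.notMem_erase k univ)]
  · rw [Pi.single_eq_of_ne hb, zero_mul]

lemma marg_slackPart_of_ne (hm : 2 ≤ m)
    (hcond : ∀ k, ((m : ℝ) - 1) * (∑ j, r k j) + s ≤ ∑ i, ∑ j, r i j)
    (hX : X ∈ PiPartial r s) {k k' : Fin m} (hkk' : k ≠ k') (b : Fin (n + 1)) :
    marg (slackPart r s X k) k' b = extMarg1 r s k (Fin.last n) * excessDist r s X k' b := by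
  have hk : k ∈ univ.erase k' := Finset.mem_erase.2 ⟨hkk', mem_univ k⟩
  unfold slackPart
  rw [marg_prod, Function.update_of_ne hkk'.symm,
    ← Finset.mul_prod_erase _ _ hk, Function.update_self,
    Finset.prod_congr rfl fun ℓ hℓ => by
      rw [Function.update_of_ne (Finset.ne_of_mem_erase hℓ)],
    Finset.sum_pi_single', if_pos (mem_univ _),
    extMarg1_last_mul_prod_sum_excessDist hm hcond hX (Finset.notMem_erase k _), mul_comm]

lemma extendPlan_mem (hm : 2 ≤ m)
    (hcond : ∀ k, ((m : ℝ) - 1) * (∑ j, r k j) + s ≤ ∑ i, ∑ j, r i j)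
    (hX : X ∈ PiPartial r s) : extendPlan r s X ∈ PiEq (extMarg1 r s) := by
  refine ⟨fun u => ?_, fun k' b => ?_⟩
  · exact add_nonneg (extend_emb_nonneg hX.1 u)
      (by simpa only [Finset.sum_apply] using
        Finset.sum_nonneg fun k _ => slackPart_nonneg hm hcond hX k u)
  have hslack : ∑ k, marg (slackPart r s X k) k' b =
      (Pi.single (Fin.last n) (extMarg1 r s k' (Fin.last n)) : Fin (n + 1) → ℝ) b +
        (∑ j, r k' j - s) * excessDist r s X k' b := by
    rw [← Finset.add_sum_erase _ _ (mem_univ k'), marg_slackPart_self hm hcond hX,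
      Finset.sum_congr rfl fun k hk =>
        marg_slackPart_of_ne hm hcond hX (Finset.ne_of_mem_erase hk) b,
      ← Finset.sum_mul, sum_erase_extMarg1_last r s hm]
  rw [extendPlan, marg_add, marg_sum, hslack]
  induction b using Fin.lastCases with
  | last => simp [marg_extend_emb_last, excessDist_last, extMarg1]
  | cast j =>
    rw [marg_extend_emb_castSucc, Pi.single_eq_of_ne (Fin.castSucc_lt_last j).ne, mul_comm,
      excessDist_castSucc_mul hX]
    simp [extMarg1]

lemma extendPlan_eq_zero_of_two_le_nLast {u : Fin m → Fin (n + 1)} (hu : 2 ≤ nLast u) :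
    extendPlan r s X u = 0 := by
  simp only [extendPlan, Pi.add_apply, Finset.sum_apply,
    extend_emb_of_nLast_ne_zero X (show nLast u ≠ 0 by omega),
    slackPart_eq_zero_of_two_le_nLast _ hu, Finset.sum_const_zero, add_zero]

lemma restr_extendPlan : restr (extendPlan r s X) = X := by
  funext v
  simp only [restr, extendPlan, Pi.add_apply, Finset.sum_apply, emb_injective.extend_apply,
    slackPart_eq_zero_of_ne_last (nLast_eq_zero_iff.1 (nLast_emb v) _), Finset.sum_const_zero,
    add_zero]

end Extension

end MPOT

theorem mpot_first_form_minimizer_general {m n : ℕ} (hm : 2 ≤ m)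
    (C : (Fin m → Fin n) → ℝ) (hC : ∀ v, 0 ≤ C v)
    (r : Fin m → Fin n → ℝ)
    (s : ℝ) (hs0 : 0 ≤ s)
    (hcond : ∀ k, ((m : ℝ) - 1) * (∑ j, r k j) + s ≤ ∑ i, ∑ j, r i j)
    (A : ℕ → ℝ) (hA1 : A 1 = 0) (hA : ∀ i, 1 ≤ i → i < m → A i < A (i + 1))
    (Xb : (Fin m → Fin (n + 1)) → ℝ) (hmem : Xb ∈ PiEq (extMarg1 r s))
    (hopt : ∀ Y ∈ PiEq (extMarg1 r s), dot (extCost C A) Xb ≤ dot (extCost C A) Y) :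
    restr Xb ∈ PiPartial r s ∧
      ∀ X ∈ PiPartial r s, dot C (restr Xb) ≤ dot C X := by
  have hlow : ∀ u, 2 ≤ nLast u → Xb u = 0 := fun u hu =>
    eq_zero_of_two_le_nLast hm hC hs0 hA1 hA hmem hopt hu
  refine ⟨restr_mem_PiPartial hm hmem hlow, fun X hX => ?_⟩
  calc dot C (restr Xb) = dot (extCost C A) Xb := (dot_extCost_of_nLast_le_one C hA1 hlow).symm
    _ ≤ dot (extCost C A) (extendPlan r s X) := hopt _ (extendPlan_mem hm hcond hX)
    _ = dot C X := by
      rw [dot_extCost_of_nLast_le_one C hA1 fun u => extendPlan_eq_zero_of_two_le_nLast,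
        restr_extendPlan]

/-- Theorem 3.1, first equivalent form, minimizer part: under the mass
condition `Σ_r ≥ (m−1)‖r_k‖₁ + s` for all `k`, if `Xb` minimizes `⟨C̄^{(1)}, ·⟩` over
`Π(r̄_1^{(1)}, …, r̄_m^{(1)})`, then its restriction to `[n]^m` is an optimal solution of
the multimarginal partial optimal transport problem. -/
theorem mpot_first_form_minimizer {m n : ℕ} (hm : 2 ≤ m) (hn : 1 ≤ n)
    (C : (Fin m → Fin n) → ℝ) (hC : ∀ v, 0 ≤ C v)
    (r : Fin m → Fin n → ℝ) (hr : ∀ k j, 0 ≤ r k j)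
    (s : ℝ) (hs0 : 0 ≤ s) (hs : ∀ k, s ≤ ∑ j, r k j)
    (hcond : ∀ k, ((m : ℝ) - 1) * (∑ j, r k j) + s ≤ ∑ i, ∑ j, r i j)
    (A : ℕ → ℝ) (hA1 : A 1 = 0) (hA : ∀ i, 1 ≤ i → i < m → A i < A (i + 1))
    (Xb : (Fin m → Fin (n + 1)) → ℝ) (hmem : Xb ∈ PiEq (extMarg1 r s))
    (hopt : ∀ Y ∈ PiEq (extMarg1 r s), dot (extCost C A) Xb ≤ dot (extCost C A) Y) :
    restr Xb ∈ PiPartial r s ∧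
      ∀ X ∈ PiPartial r s, dot C (restr Xb) ≤ dot C X :=
  mpot_first_form_minimizer_general hm C hC r s hs0 hcond A hA1 hA Xb hmem hopt
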